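/- For all real v with 0 < v < 1, setting F(v) = ln(2/√(1-v²)) - (v²(1-v²)/4) ₄F₃[1,1,3/2,3/2; 2,2,2; 4v²(1-v²)], one has F'(v) = (π - (2-4v²) K(2v√(1-v²))) / (2πv(1-v²)), where K is the complete elliptic integral of the first kind. -/

import Mathlib

open Real

/-- Rising factorial (Pochhammer symbol) `(a)_n` on the reals. -/
noncomputable def poch (a : ℝ) (n : ℕ) : ℝ := (ascPochhammer ℝ n).eval a

/-- Generalized hypergeometric series ₄F₃. -/
noncomputable def F43 (a1 a2 a3 a4 b1 b2 b3 x : ℝ) : ℝ :=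
  ∑' n : ℕ, (poch a1 n * poch a2 n * poch a3 n * poch a4 n) /
    (poch b1 n * poch b2 n * poch b3 n * (n.factorial : ℝ)) * x ^ n

/-- Generalized hypergeometric series ₃F₂. -/
noncomputable def F32 (a1 a2 a3 b1 b2 x : ℝ) : ℝ :=
  ∑' n : ℕ, (poch a1 n * poch a2 n * poch a3 n) /
    (poch b1 n * poch b2 n * (n.factorial : ℝ)) * x ^ n

/-- Gaussian hypergeometric series ₂F₁. -/
noncomputable def F21 (a1 a2 b1 x : ℝ) : ℝ :=
  ∑' n : ℕ, (poch a1 n * poch a2 n) /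
    (poch b1 n * (n.factorial : ℝ)) * x ^ n

/-- Complete elliptic integral of the first kind. -/
noncomputable def ellipticK (k : ℝ) : ℝ :=
  ∫ θ in (0:ℝ)..(π/2), 1 / Real.sqrt (1 - (k * Real.sin θ) ^ 2)

/-- Complete elliptic integral of the second kind. -/
noncomputable def ellipticE (k : ℝ) : ℝ :=
  ∫ θ in (0:ℝ)..(π/2), Real.sqrt (1 - (k * Real.sin θ) ^ 2)

/-! Expanding `(1 - k² sin² θ)^(-1/2)` by the binomial series and integrating termwise with
Wallis' integrals gives `K(k) = π/2 ∑ cₘ² k^(2m)`, where `cₘ = (1/2)ₘ / m!`. The ₄F₃ term is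
`1/4 ∑ c_{n+1}² / (n+1) · x^(n+1)` with `x = 4t²(1-t²)`, so its termwise derivative sums to
`2t(1-2t²)(2K/π - 1)/x`. Termwise differentiation is legitimate on all of `|t| < 1`, including
`t = 1/√2` where `x = 1`: with `a = 1 - 2t²` one has `x = 1 - a²` and `|x'| ≤ 8|a|`, and
`c_{n+1}² |a| (1 - a²)ⁿ = O(n^(-3/2))` uniformly in `a`. -/

lemma poch_succ (a : ℝ) (n : ℕ) : poch a (n + 1) = poch a n * (a + n) := by
  simp [poch, ascPochhammer_succ_right]

lemma poch_one (n : ℕ) : poch 1 n = n.factorial := ascPochhammer_eval_one ℝ n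

lemma poch_two (n : ℕ) : poch 2 n = (n + 1).factorial := by
  simpa [poch, one_add_one_eq_two, add_comm 1 n] using factorial_mul_ascPochhammer ℝ 1 n

lemma poch_three_halves (n : ℕ) : poch (3/2) n = 2 * poch (1/2) (n + 1) := by
  rw [poch, poch, ascPochhammer_succ_left, Polynomial.eval_mul, Polynomial.eval_comp]
  norm_num
  ring

/-- The coefficient of `wᵐ` in `(1 - w)^(-1/2)`, i.e. `binom(2m, m) / 4ᵐ`. -/
noncomputable def sqrtCoeff (m : ℕ) : ℝ := poch (1/2) m / m.factorial

lemma sqrtCoeff_zero : sqrtCoeff 0 = 1 := by simp [sqrtCoeff, poch]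

lemma sqrtCoeff_succ (m : ℕ) : sqrtCoeff (m + 1) = (2 * m + 1) / (2 * m + 2) * sqrtCoeff m := by
  rw [sqrtCoeff, sqrtCoeff, poch_succ, Nat.factorial_succ]
  push_cast
  field_simp
  ring

lemma sqrtCoeff_pos (m : ℕ) : 0 < sqrtCoeff m := by
  induction m with
  | zero => simp [sqrtCoeff_zero]
  | succ m ih => rw [sqrtCoeff_succ]; positivity

lemma sqrtCoeff_sq_le (m : ℕ) : sqrtCoeff m ^ 2 ≤ 1 / (2 * m + 1) := by
  induction m with
  | zero => simp [sqrtCoeff_zero]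
  | succ m ih =>
    rw [sqrtCoeff_succ, mul_pow, Nat.cast_succ]
    calc ((2 * m + 1) / (2 * m + 2)) ^ 2 * sqrtCoeff m ^ 2
        ≤ ((2 * m + 1) / (2 * m + 2)) ^ 2 * (1 / (2 * m + 1)) := by gcongr
      _ ≤ 1 / (2 * ((m : ℝ) + 1) + 1) := by
        rw [div_pow, div_mul_div_comm, div_le_div_iff₀ (by positivity) (by positivity)]
        nlinarith

lemma integral_sin_pow_even_pi_div_two (m : ℕ) :
    ∫ θ in (0:ℝ)..(π/2), sin θ ^ (2 * m) = π / 2 * sqrtCoeff m := by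
  induction m with
  | zero => simp [sqrtCoeff_zero]
  | succ m ih =>
    rw [show 2 * (m + 1) = 2 * m + 2 by ring, integral_sin_pow, ih, sqrtCoeff_succ]
    simp only [sin_zero, cos_pi_div_two]
    push_cast
    ring

lemma sqrtCoeff_eq_choose (m : ℕ) : sqrtCoeff m = Ring.choose ((1/2 : ℝ) + m - 1) m := by
  rw [← Ring.multichoose_eq, sqrtCoeff, poch, ← Polynomial.ascPochhammer_smeval_eq_eval,
    ← Ring.factorial_nsmul_multichoose_eq_ascPochhammer, nsmul_eq_mul]
  field_simp

lemma hasSum_sqrtCoeff_mul_pow {w : ℝ} (hw : |w| < 1) :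
    HasSum (fun m => sqrtCoeff m * w ^ m) (1 / √(1 - w)) := by
  have h := (one_div_one_sub_rpow_hasFPowerSeriesOnBall_zero (1/2 : ℝ)).hasSum
    (y := w) (by simpa [enorm_eq_nnnorm, ← NNReal.coe_lt_coe] using hw)
  simpa [FormalMultilinearSeries.ofScalars_apply_eq, sqrtCoeff_eq_choose, Real.sqrt_eq_rpow,
    mul_comm] using h

lemma hasSum_ellipticK {k : ℝ} (hk : k ^ 2 < 1) :
    HasSum (fun m => π / 2 * sqrtCoeff m ^ 2 * (k ^ 2) ^ m) (ellipticK k) := by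
  have hsin (θ : ℝ) : (k * sin θ) ^ 2 ≤ k ^ 2 := by
    rw [mul_pow]; exact mul_le_of_le_one_right (sq_nonneg k) (sin_sq_le_one θ)
  have hterm (m : ℕ) : ∫ θ in (0:ℝ)..(π/2), sqrtCoeff m * ((k * sin θ) ^ 2) ^ m
      = π / 2 * sqrtCoeff m ^ 2 * (k ^ 2) ^ m := by
    simp_rw [mul_pow, ← pow_mul, intervalIntegral.integral_const_mul,
      integral_sin_pow_even_pi_div_two]
    ring
  simp_rw [← hterm]
  refine intervalIntegral.hasSum_integral_of_dominated_convergence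
    (fun m _ => sqrtCoeff m * (k ^ 2) ^ m) (fun m => by fun_prop) (fun m => ?_)
    (.of_forall fun _ _ =>
      (hasSum_sqrtCoeff_mul_pow (by rwa [abs_of_nonneg (sq_nonneg k)])).summable)
    intervalIntegrable_const (.of_forall fun θ _ => hasSum_sqrtCoeff_mul_pow ?_)
  · refine .of_forall fun θ _ => ?_
    have hc := (sqrtCoeff_pos m).le
    rw [Real.norm_of_nonneg (by positivity)]
    exact mul_le_mul_of_nonneg_left (pow_le_pow_left₀ (sq_nonneg _) (hsin θ) m) hc
  · rw [abs_of_nonneg (sq_nonneg _)]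
    exact (hsin θ).trans_lt hk

lemma hasSum_sqrtCoeff_succ_sq {k : ℝ} (hk : k ^ 2 < 1) (hk0 : k ≠ 0) :
    HasSum (fun n => sqrtCoeff (n + 1) ^ 2 * (k ^ 2) ^ n)
      ((2 * ellipticK k / π - 1) / k ^ 2) := by
  have h := ((hasSum_nat_add_iff' 1).2 (hasSum_ellipticK hk)).mul_left (2 / π / k ^ 2)
  rw [Finset.sum_range_one, sqrtCoeff_zero, one_pow, pow_zero, mul_one, mul_one] at h
  rw [show (2 * ellipticK k / π - 1) / k ^ 2 = 2 / π / k ^ 2 * (ellipticK k - π / 2) by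
    field_simp]
  refine h.congr_fun fun n => ?_
  field_simp
  ring

lemma mul_F43_eq_tsum (x : ℝ) :
    x / 4 * F43 1 1 (3/2) (3/2) 2 2 2 x =
      ∑' n : ℕ, sqrtCoeff (n + 1) ^ 2 / (n + 1) * x ^ (n + 1) := by
  rw [F43, ← tsum_mul_left]
  refine tsum_congr fun n => ?_
  rw [poch_one, poch_two, poch_three_halves, sqrtCoeff, Nat.factorial_succ]
  push_cast
  field_simp
  ring

lemma mul_one_sub_pow_le {w : ℝ} (hw0 : 0 ≤ w) (hw1 : w ≤ 1) (n : ℕ) :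
    w * (1 - w) ^ n ≤ 1 / (n + 1) := by
  have hbernoulli : 1 + n * w ≤ (1 + w) ^ n := one_add_mul_le_pow (by linarith) n
  have hprod : (1 - w) ^ n * (1 + w) ^ n ≤ 1 := by
    rw [← mul_pow]
    exact pow_le_one₀ (by nlinarith) (by nlinarith)
  rw [le_div_iff₀ (by positivity)]
  nlinarith [pow_nonneg (sub_nonneg.2 hw1) n]

lemma abs_mul_one_sub_sq_pow_le {a : ℝ} (ha : |a| ≤ 1) (n : ℕ) :
    |a| * (1 - a ^ 2) ^ n ≤ 1 / √(n + 1) := by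
  have ha2 : a ^ 2 ≤ 1 := by nlinarith [sq_abs a, abs_nonneg a]
  rw [one_div, ← Real.sqrt_inv, Real.le_sqrt (by positivity) (by positivity), mul_pow, sq_abs,
    ← pow_mul, ← one_div]
  calc a ^ 2 * (1 - a ^ 2) ^ (n * 2) ≤ 1 / ((n * 2 : ℕ) + 1) :=
        mul_one_sub_pow_le (sq_nonneg a) ha2 _
    _ ≤ 1 / (n + 1) := by gcongr; linarith

lemma summable_one_div_mul_sqrt : Summable (fun n : ℕ => 1 / ((n + 1) * √(n + 1))) := by
  refine ((summable_nat_add_iff 1).2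
    (Real.summable_one_div_nat_rpow.2 (by norm_num : (1 : ℝ) < 3 / 2))).congr fun n => ?_
  rw [show (3 / 2 : ℝ) = 1 + 1 / 2 by norm_num, Real.rpow_add (by positivity), Real.rpow_one,
    ← Real.sqrt_eq_rpow]
  push_cast
  rfl

lemma norm_sqrtCoeff_sq_mul_deriv_le {t : ℝ} (ht : |t| < 1) (n : ℕ) :
    ‖sqrtCoeff (n + 1) ^ 2 * (4 * t ^ 2 * (1 - t ^ 2)) ^ n * (8 * t - 16 * t ^ 3)‖
      ≤ 8 / ((n + 1) * √(n + 1)) := by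
  set a := 1 - 2 * t ^ 2
  have ha : |a| ≤ 1 := by rw [abs_le]; constructor <;> nlinarith [sq_abs t, abs_nonneg t]
  have hx : 4 * t ^ 2 * (1 - t ^ 2) = 1 - a ^ 2 := by ring
  have hdx : |8 * t - 16 * t ^ 3| ≤ 8 * |a| := by
    rw [show 8 * t - 16 * t ^ 3 = 8 * t * a by ring, abs_mul, abs_mul,
      abs_of_pos (by norm_num : (0:ℝ) < 8)]
    gcongr
    nlinarith [abs_nonneg a]
  have hc : sqrtCoeff (n + 1) ^ 2 ≤ 1 / (n + 1) :=
    (sqrtCoeff_sq_le (n + 1)).trans (by gcongr; push_cast; linarith)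
  have hxn : 0 ≤ (1 - a ^ 2) ^ n := pow_nonneg (by nlinarith [sq_abs a, abs_nonneg a]) n
  rw [Real.norm_eq_abs, abs_mul, abs_mul, abs_of_nonneg (sq_nonneg _), hx, abs_of_nonneg hxn]
  calc sqrtCoeff (n + 1) ^ 2 * (1 - a ^ 2) ^ n * |8 * t - 16 * t ^ 3|
      ≤ 1 / (n + 1) * (1 - a ^ 2) ^ n * (8 * |a|) := by gcongr
    _ = 8 / (n + 1) * (|a| * (1 - a ^ 2) ^ n) := by ring
    _ ≤ 8 / (n + 1) * (1 / √(n + 1)) := by gcongr; exact abs_mul_one_sub_sq_pow_le ha n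
    _ = 8 / ((n + 1) * √(n + 1)) := by field_simp

lemma hasDerivAt_sqrtCoeff_sq_term (n : ℕ) (t : ℝ) :
    HasDerivAt (fun t => sqrtCoeff (n + 1) ^ 2 / (n + 1) * (4 * t ^ 2 * (1 - t ^ 2)) ^ (n + 1))
      (sqrtCoeff (n + 1) ^ 2 * (4 * t ^ 2 * (1 - t ^ 2)) ^ n * (8 * t - 16 * t ^ 3)) t := by
  have hx : HasDerivAt (fun t : ℝ => 4 * t ^ 2 * (1 - t ^ 2)) (8 * t - 16 * t ^ 3) t := by
    refine (((hasDerivAt_pow 2 t).const_mul 4).mul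
      ((hasDerivAt_pow 2 t).const_sub 1)).congr_deriv ?_
    norm_num
    ring
  refine ((hx.pow (n + 1)).const_mul (sqrtCoeff (n + 1) ^ 2 / (n + 1))).congr_deriv ?_
  rw [Nat.add_sub_cancel]
  push_cast
  field_simp

lemma hasDerivAt_tsum_sqrtCoeff_sq {v : ℝ} (hv : |v| < 1) :
    HasDerivAt
      (fun t => ∑' n : ℕ, sqrtCoeff (n + 1) ^ 2 / (n + 1) * (4 * t ^ 2 * (1 - t ^ 2)) ^ (n + 1))
      (∑' n : ℕ, sqrtCoeff (n + 1) ^ 2 * (4 * v ^ 2 * (1 - v ^ 2)) ^ n * (8 * v - 16 * v ^ 3))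
      v := by
  have hball {t : ℝ} : t ∈ Metric.ball 0 1 ↔ |t| < 1 := by simp
  refine hasDerivAt_tsum_of_isPreconnected (summable_one_div_mul_sqrt.mul_left 8)
    Metric.isOpen_ball (convex_ball 0 1).isPreconnected
    (fun n t _ => hasDerivAt_sqrtCoeff_sq_term n t)
    (fun n t ht => ?_) (Metric.mem_ball_self one_pos) (by simp) (hball.2 hv)
  rw [mul_one_div]
  exact norm_sqrtCoeff_sq_mul_deriv_le (hball.1 ht) n

lemma hasDerivAt_log_two_div_sqrt {v : ℝ} (hv : |v| < 1) :
    HasDerivAt (fun t => log (2 / √(1 - t ^ 2))) (v / (1 - v ^ 2)) v := by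
  have hv2 : 0 < 1 - v ^ 2 := by nlinarith [sq_abs v, abs_nonneg v]
  have hs : 0 < √(1 - v ^ 2) := Real.sqrt_pos.2 hv2
  have hsqrt : HasDerivAt (fun t => √(1 - t ^ 2)) (-(2 * v) / (2 * √(1 - v ^ 2))) v := by
    simpa using ((hasDerivAt_pow 2 v).const_sub 1).sqrt hv2.ne'
  refine (((hasDerivAt_const v (2 : ℝ)).fun_div hsqrt hs.ne').log
    (by positivity)).congr_deriv ?_
  field_simp
  rw [Real.sq_sqrt hv2.le]
  ring

lemma one_sub_two_mul_sq_mul_tsum_sqrtCoeff_sq {v : ℝ} (hv0 : 0 < v) (hv1 : v < 1) :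
    (1 - 2 * v ^ 2) * ∑' n : ℕ, sqrtCoeff (n + 1) ^ 2 * (4 * v ^ 2 * (1 - v ^ 2)) ^ n
      = (1 - 2 * v ^ 2) *
        ((2 * ellipticK (2 * v * √(1 - v ^ 2)) / π - 1) / (4 * v ^ 2 * (1 - v ^ 2))) := by
  -- at `v = 1/√2` the modulus is `1` and both series diverge, but the factor `1 - 2v²` vanishes
  rcases eq_or_ne (1 - 2 * v ^ 2) 0 with hcrit | hcrit
  · rw [hcrit, zero_mul, zero_mul]
  have hk : (2 * v * √(1 - v ^ 2)) ^ 2 = 4 * v ^ 2 * (1 - v ^ 2) := by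
    rw [mul_pow, Real.sq_sqrt (by nlinarith)]
    ring
  have hk1 : (2 * v * √(1 - v ^ 2)) ^ 2 < 1 := by
    rw [hk]
    nlinarith [sq_pos_of_ne_zero hcrit]
  have hk0 : 2 * v * √(1 - v ^ 2) ≠ 0 := by
    have : 0 < √(1 - v ^ 2) := Real.sqrt_pos.2 (by nlinarith)
    positivity
  rw [← hk, (hasSum_sqrtCoeff_succ_sq hk1 hk0).tsum_eq]

theorem stmt_13 (v : ℝ) (hv0 : 0 < v) (hv1 : v < 1) :
    HasDerivAt
      (fun t : ℝ => Real.log (2 / Real.sqrt (1 - t ^ 2)) -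
        (t ^ 2 * (1 - t ^ 2) / 4) *
          F43 1 1 (3/2) (3/2) 2 2 2 (4 * t ^ 2 * (1 - t ^ 2)))
      ((π - (2 - 4 * v ^ 2) * ellipticK (2 * v * Real.sqrt (1 - v ^ 2))) /
        (2 * π * v * (1 - v ^ 2))) v := by
  have hv : |v| < 1 := abs_lt.2 ⟨by linarith, hv1⟩
  have hF (t : ℝ) :
      t ^ 2 * (1 - t ^ 2) / 4 * F43 1 1 (3/2) (3/2) 2 2 2 (4 * t ^ 2 * (1 - t ^ 2)) =
        (∑' n : ℕ, sqrtCoeff (n + 1) ^ 2 / (n + 1) * (4 * t ^ 2 * (1 - t ^ 2)) ^ (n + 1)) / 4 := by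
    rw [← mul_F43_eq_tsum]
    ring
  simp_rw [hF]
  refine ((hasDerivAt_log_two_div_sqrt hv).sub
    ((hasDerivAt_tsum_sqrtCoeff_sq hv).div_const 4)).congr_deriv ?_
  have key := one_sub_two_mul_sq_mul_tsum_sqrtCoeff_sq hv0 hv1
  rw [tsum_mul_right]
  field_simp at key ⊢
  linear_combination -4 * key
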